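/- arXiv:2211.16787 — 2 statements merged into one kernel-verified Lean document; each statement's English description precedes it below -/
import Mathlib

section
/- Let n ≥ 5 and define maps X, Y on the grid {1,…,n} × {1,…,n+1} by X(x,y) = (n+1-y, x) if 1 ≤ y ≤ n and X(x,y) = (x,y) otherwise; Y(x,y) = (n+2-y, x+1) if 2 ≤ y ≤ n+1 and Y(x,y) = (x,y) otherwise. Let E be the belt, i.e., E = {(x,1) : 1 ≤ x ≤ n} ∪ {(n,y) : 2 ≤ y ≤ n} ∪ {(x,n+1) : 1 ≤ x ≤ n}. Then the image of E under the composition X∘Y²∘X∘Y⁻¹∘X⁻¹ (applied left to right: first X, then Y², then X, then Y⁻¹, then X⁻¹) intersects E in exactly the single square (n, n+1). -/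
/-- `X`: 90° counter-clockwise rotation of the left `n × n` block of the `n × (n+1)` board. -/
def Xrot (n : ℕ) (p : ℕ × ℕ) : ℕ × ℕ :=
  if 1 ≤ p.2 ∧ p.2 ≤ n then (n + 1 - p.2, p.1) else p

/-- `Y`: 90° counter-clockwise rotation of the right `n × n` block. -/
def Yrot (n : ℕ) (p : ℕ × ℕ) : ℕ × ℕ :=
  if 2 ≤ p.2 ∧ p.2 ≤ n + 1 then (n + 2 - p.2, p.1 + 1) else p

/-- `X⁻¹`: 90° clockwise rotation of the left block. -/
def XrotInv (n : ℕ) (p : ℕ × ℕ) : ℕ × ℕ :=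
  if 1 ≤ p.2 ∧ p.2 ≤ n then (p.2, n + 1 - p.1) else p

/-- `Y⁻¹`: 90° clockwise rotation of the right block. -/
def YrotInv (n : ℕ) (p : ℕ × ℕ) : ℕ × ℕ :=
  if 2 ≤ p.2 ∧ p.2 ≤ n + 1 then (p.2 - 1, n + 2 - p.1) else p

/-- The belt `E` of the `n × (n+1)` board: leftmost column, bottom row, rightmost column. -/
def belt (n : ℕ) : Set (ℕ × ℕ) :=
  {p | (1 ≤ p.1 ∧ p.1 ≤ n ∧ p.2 = 1) ∨ (p.1 = n ∧ 2 ≤ p.2 ∧ p.2 ≤ n) ∨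
       (1 ≤ p.1 ∧ p.1 ≤ n ∧ p.2 = n + 1)}

/-!
Follow the three segments of the belt through `A` one rotation at a time. The square `(2, 1)`
is carried to `(n, n + 1)`; every other square of the belt lands at some `(a, b)` with `a < n`
and `2 ≤ b ≤ n`, and the belt meets that strip nowhere, since its squares with `2 ≤ b ≤ n` all
have `a = n`. The bound `n ≥ 5` is what keeps the image `(4, n + 2 - y)` of the segment
`x = n` off the belt.
-/

/-- The paper's `A = X Y² X Y⁻¹ X⁻¹`, whose factors act left to right. -/
def conjAlg (n : ℕ) (p : ℕ × ℕ) : ℕ × ℕ :=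
  XrotInv n (YrotInv n (Xrot n (Yrot n (Yrot n (Xrot n p)))))

section Rotations

variable {n a b : ℕ}

theorem Xrot_apply_of_le (h₁ : 1 ≤ b) (h₂ : b ≤ n) : Xrot n (a, b) = (n + 1 - b, a) :=
  if_pos ⟨h₁, h₂⟩

theorem Xrot_apply_of_lt (h : n < b) : Xrot n (a, b) = (a, b) :=
  if_neg fun _ => by omega

theorem Yrot_apply_of_le (h₁ : 2 ≤ b) (h₂ : b ≤ n + 1) : Yrot n (a, b) = (n + 2 - b, a + 1) :=
  if_pos ⟨h₁, h₂⟩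

theorem Yrot_apply_of_lt (h : b < 2) : Yrot n (a, b) = (a, b) :=
  if_neg fun _ => by omega

theorem XrotInv_apply_of_le (h₁ : 1 ≤ b) (h₂ : b ≤ n) : XrotInv n (a, b) = (b, n + 1 - a) :=
  if_pos ⟨h₁, h₂⟩

theorem XrotInv_apply_of_lt (h : n < b) : XrotInv n (a, b) = (a, b) :=
  if_neg fun _ => by omega

theorem YrotInv_apply_of_le (h₁ : 2 ≤ b) (h₂ : b ≤ n + 1) :
    YrotInv n (a, b) = (b - 1, n + 2 - a) :=
  if_pos ⟨h₁, h₂⟩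

theorem YrotInv_apply_of_lt (h : b < 2) : YrotInv n (a, b) = (a, b) :=
  if_neg fun _ => by omega

end Rotations

section BeltImage

variable {n x y : ℕ}

theorem conjAlg_one_one (hn : 2 ≤ n) : conjAlg n (1, 1) = (2, 2) := by
  simp (disch := omega) only [conjAlg, Xrot_apply_of_le, Yrot_apply_of_lt, YrotInv_apply_of_le,
    XrotInv_apply_of_le]
  ext <;> omega

theorem conjAlg_two_one (hn : 2 ≤ n) : conjAlg n (2, 1) = (n, n + 1) := by
  simp (disch := omega) only [conjAlg, Xrot_apply_of_le, Yrot_apply_of_le, Xrot_apply_of_lt,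
    YrotInv_apply_of_le, XrotInv_apply_of_lt]
  ext <;> omega

theorem conjAlg_mk_one (hx₁ : 3 ≤ x) (hx₂ : x ≤ n) :
    conjAlg n (x, 1) = (1, n + 3 - x) := by
  simp (disch := omega) only [conjAlg, Xrot_apply_of_le, Yrot_apply_of_le, YrotInv_apply_of_lt,
    XrotInv_apply_of_le]
  ext <;> omega

theorem conjAlg_self_mk (hn : 4 ≤ n) (hy₁ : 2 ≤ y) (hy₂ : y ≤ n) :
    conjAlg n (n, y) = (4, n + 2 - y) := by
  simp (disch := omega) only [conjAlg, Xrot_apply_of_le, Yrot_apply_of_le, YrotInv_apply_of_le,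
    XrotInv_apply_of_le]
  ext <;> omega

theorem conjAlg_self_succ (hn : 2 ≤ n) : conjAlg n (n, n + 1) = (1, 2) := by
  simp (disch := omega) only [conjAlg, Xrot_apply_of_lt, Yrot_apply_of_le, Xrot_apply_of_le,
    YrotInv_apply_of_lt, XrotInv_apply_of_le]
  ext <;> omega

theorem conjAlg_mk_succ (hn : 3 ≤ n) (hx₁ : 1 ≤ x) (hx₂ : x < n) : conjAlg n (x, n + 1) = (3, x + 1) := by
  simp (disch := omega) only [conjAlg, Xrot_apply_of_lt, Yrot_apply_of_le, Xrot_apply_of_le,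
    YrotInv_apply_of_le, XrotInv_apply_of_le]
  ext <;> omega

theorem not_mem_belt_of_lt (hx : x < n) (hy₁ : 2 ≤ y) (hy₂ : y ≤ n) : (x, y) ∉ belt n := by
  rintro (⟨-, -, h⟩ | ⟨h, -⟩ | ⟨-, -, h⟩) <;> simp only at h <;> omega

theorem conjAlg_not_mem_belt (hn : 5 ≤ n) {q : ℕ × ℕ} (hq : q ∈ belt n) (hne : q ≠ (2, 1)) :
    conjAlg n q ∉ belt n := by
  obtain ⟨x, y⟩ := q
  rcases hq with ⟨hx₁, hx₂, rfl⟩ | ⟨rfl, hy₁, hy₂⟩ | ⟨hx₁, hx₂, rfl⟩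
  · obtain rfl | rfl | hx₃ : x = 1 ∨ x = 2 ∨ 3 ≤ x := by omega
    · rw [conjAlg_one_one (by omega)]
      exact not_mem_belt_of_lt (by omega) le_rfl (by omega)
    · exact absurd rfl hne
    · rw [conjAlg_mk_one hx₃ hx₂]
      exact not_mem_belt_of_lt (by omega) (by omega) (by omega)
  · rw [conjAlg_self_mk (by omega) hy₁ hy₂]
    exact not_mem_belt_of_lt (by omega) (by omega) (by omega)
  · obtain rfl | hx₃ : x = n ∨ x < n := by omega
    · rw [conjAlg_self_succ (by omega)]
      exact not_mem_belt_of_lt (by omega) le_rfl (by omega)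
    · rw [conjAlg_mk_succ (by omega) hx₁ hx₃]
      exact not_mem_belt_of_lt (by omega) (by omega) (by omega)

end BeltImage

/-- For `n ≥ 5`, the image of the belt under the algorithm `A = X Y² X Y⁻¹ X⁻¹`
(applied left to right) intersects the belt in exactly the single square `(n, n+1)`. -/
theorem image_belt_inter_belt (n : ℕ) (hn : 5 ≤ n) :
    ((fun p => XrotInv n (YrotInv n (Xrot n (Yrot n (Yrot n (Xrot n p)))))) '' belt n)
      ∩ belt n = {(n, n + 1)} := by
  have h21 : conjAlg n (2, 1) = (n, n + 1) := conjAlg_two_one (by omega)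
  ext p
  constructor
  · rintro ⟨⟨q, hq, rfl⟩, hp⟩
    by_cases hne : q = (2, 1)
    · exact hne ▸ h21
    · exact absurd hp (conjAlg_not_mem_belt hn hq hne)
  · rintro rfl
    refine ⟨⟨(2, 1), Or.inl ⟨by omega, by omega, rfl⟩, h21⟩, Or.inr (Or.inr ⟨by omega, le_rfl, rfl⟩)⟩
end

section
/- Let n ≥ 4 be even and define X, Y on {1,…,n} × {1,…,n+1} as the rotation maps X(x,y) = (n+1-y, x) for 1 ≤ y ≤ n (identity otherwise) and Y(x,y) = (n+2-y, x+1) for 2 ≤ y ≤ n+1 (identity otherwise). Then the composition X, Y², X⁻¹, Y⁻¹, X, Y⁻¹, X⁻¹ (applied in that order) fixes both (1,1) and (2,1), and maps the set E = {(x,1) : 3 ≤ x ≤ n} to {(x,3) : 3 ≤ x ≤ n}, which is disjoint from E. -/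
section Rotations

variable {n x y : ℕ}

theorem Xrot_of_mem (h1 : 1 ≤ y) (h2 : y ≤ n) : Xrot n (x, y) = (n + 1 - y, x) :=
  if_pos ⟨h1, h2⟩

theorem Xrot_of_gt (h : n < y) : Xrot n (x, y) = (x, y) :=
  if_neg (by omega)

theorem Yrot_of_mem (h1 : 2 ≤ y) (h2 : y ≤ n + 1) : Yrot n (x, y) = (n + 2 - y, x + 1) :=
  if_pos ⟨h1, h2⟩

theorem Yrot_of_lt_two (h : y < 2) : Yrot n (x, y) = (x, y) :=
  if_neg (by omega)

theorem XrotInv_of_mem (h1 : 1 ≤ y) (h2 : y ≤ n) : XrotInv n (x, y) = (y, n + 1 - x) :=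
  if_pos ⟨h1, h2⟩

theorem XrotInv_of_gt (h : n < y) : XrotInv n (x, y) = (x, y) :=
  if_neg (by omega)

theorem YrotInv_of_mem (h1 : 2 ≤ y) (h2 : y ≤ n + 1) : YrotInv n (x, y) = (y - 1, n + 2 - x) :=
  if_pos ⟨h1, h2⟩

theorem YrotInv_of_lt_two (h : y < 2) : YrotInv n (x, y) = (x, y) :=
  if_neg (by omega)

end Rotations

/-- The algorithm `X Y² X⁻¹ Y⁻¹ X Y⁻¹ X⁻¹`, applied from left to right. -/
def spiralStep5 (n : ℕ) (p : ℕ × ℕ) : ℕ × ℕ :=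
  XrotInv n (YrotInv n (Xrot n (YrotInv n (XrotInv n (Yrot n (Yrot n (Xrot n p)))))))

section Step5

variable {n : ℕ}

theorem spiralStep5_one_one (hn : 1 ≤ n) : spiralStep5 n (1, 1) = (1, 1) := by
  simp (disch := omega) only [spiralStep5, Xrot_of_mem, Yrot_of_lt_two, XrotInv_of_mem,
    YrotInv_of_lt_two]
  ext <;> omega

theorem spiralStep5_two_one (hn : 2 ≤ n) : spiralStep5 n (2, 1) = (2, 1) := by
  simp (disch := omega) only [spiralStep5, Xrot_of_mem, Xrot_of_gt, Yrot_of_mem, XrotInv_of_mem,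
    XrotInv_of_gt, YrotInv_of_mem]
  ext <;> omega

/-- The orbit is `(x,1) → (n,x) → (n+2-x,n+1) → (1,n+3-x) → (n+3-x,n) → (n-1,x-1)
→ (n+2-x,n-1) → (n-2,x) → (x,3)`; `3 ≤ x ≤ n` keeps every step inside the rotated block. -/
theorem spiralStep5_col_one {x : ℕ} (h3 : 3 ≤ x) (hx : x ≤ n) :
    spiralStep5 n (x, 1) = (x, 3) := by
  simp (disch := omega) only [spiralStep5, Xrot_of_mem, Yrot_of_mem, XrotInv_of_mem,
    YrotInv_of_mem]
  ext <;> omega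

end Step5

theorem spiral_cycle_step5_even_general (n : ℕ) (hn : 4 ≤ n) :
    letI g : ℕ × ℕ → ℕ × ℕ := fun p =>
      XrotInv n (YrotInv n (Xrot n (YrotInv n (XrotInv n (Yrot n (Yrot n (Xrot n p)))))))
    g (1, 1) = (1, 1) ∧ g (2, 1) = (2, 1) ∧
    g '' {p : ℕ × ℕ | 3 ≤ p.1 ∧ p.1 ≤ n ∧ p.2 = 1} =
      {p : ℕ × ℕ | 3 ≤ p.1 ∧ p.1 ≤ n ∧ p.2 = 3} ∧
    Disjoint ({p : ℕ × ℕ | 3 ≤ p.1 ∧ p.1 ≤ n ∧ p.2 = 3})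
      ({p : ℕ × ℕ | 3 ≤ p.1 ∧ p.1 ≤ n ∧ p.2 = 1}) := by
  refine ⟨spiralStep5_one_one (by omega), spiralStep5_two_one (by omega), ?_, ?_⟩
  · ext ⟨a, b⟩
    constructor
    · rintro ⟨⟨x, _⟩, ⟨h3, hx, rfl⟩, hg⟩
      obtain ⟨rfl, rfl⟩ := Prod.mk.inj ((spiralStep5_col_one h3 hx).symm.trans hg)
      exact ⟨h3, hx, rfl⟩
    · rintro ⟨h3, hx, rfl⟩
      exact ⟨(a, 1), ⟨h3, hx, rfl⟩, spiralStep5_col_one h3 hx⟩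
  · rw [Set.disjoint_left]
    rintro ⟨a, b⟩ ⟨-, -, rfl⟩ ⟨-, -, h⟩
    omega

/-- Step 5 (even case) of the spiral-cycle algorithm: for even `n ≥ 4`, the algorithm
`X Y² X⁻¹ Y⁻¹ X Y⁻¹ X⁻¹` (applied in that order) fixes `(1,1)` and `(2,1)`, and maps
the set `E = {(x,1) : 3 ≤ x ≤ n}` onto `{(x,3) : 3 ≤ x ≤ n}`, which is disjoint
from `E`. -/
theorem spiral_cycle_step5_even (n : ℕ) (hn : 4 ≤ n) (hev : Even n) :
    letI g : ℕ × ℕ → ℕ × ℕ := fun p =>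
      XrotInv n (YrotInv n (Xrot n (YrotInv n (XrotInv n (Yrot n (Yrot n (Xrot n p)))))))
    g (1, 1) = (1, 1) ∧ g (2, 1) = (2, 1) ∧
    g '' {p : ℕ × ℕ | 3 ≤ p.1 ∧ p.1 ≤ n ∧ p.2 = 1} =
      {p : ℕ × ℕ | 3 ≤ p.1 ∧ p.1 ≤ n ∧ p.2 = 3} ∧
    Disjoint ({p : ℕ × ℕ | 3 ≤ p.1 ∧ p.1 ≤ n ∧ p.2 = 3})
      ({p : ℕ × ℕ | 3 ≤ p.1 ∧ p.1 ≤ n ∧ p.2 = 1}) :=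
  spiral_cycle_step5_even_general n hn
end
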